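/- On the algebra 𝒜, the supercharges satisfy Q₋∘Q₋ = ½∂₋, Q₊∘Q₊ = ½∂₊, and Q₋∘Q₊ − Q₊∘Q₋ = ∂_z as ℝ-linear operators. Moreover Q₋ and Q₊ commute with ∂₋ and ∂₊, and Q₋∘∂_z + ∂_z∘Q₋ = 0 and Q₊∘∂_z + ∂_z∘Q₊ = 0. Hence, setting P₋ = ∂₋, P₊ = ∂₊, Z = ∂_z, these vector fields form a representation of the Z₂×Z₂-graded d=2, N=(1,1) supertranslation algebra: [Q₋,Q₋] = P₋, [Q₊,Q₊] = P₊, [Q₋,Q₊] = Z, all other graded brackets vanishing. -/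

import Mathlib

noncomputable section

/-- The group `ℤ₂ × ℤ₂`. -/
abbrev G2 : Type := ZMod 2 × ZMod 2

/-- The standard scalar product on `ℤ₂ × ℤ₂`. -/
def ip (γ γ' : G2) : ZMod 2 := γ.1 * γ'.1 + γ.2 * γ'.2

/-- The Koszul sign `(-1)^x`. -/
def ksign (x : ZMod 2) : ℝ := if x = 0 then 1 else -1

/-- Two-dimensional Minkowski spacetime in light-cone coordinates `(x⁻, x⁺)`. -/
abbrev E2 : Type := ℝ × ℝ

/-- Coefficient families `(k, a, b) ↦ f_{k,a,b}` representing the elements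
`Σ_{k,a,b} z^k θ₋^a θ₊^b f_{k,a,b}(x⁻,x⁺)` of the `ℤ₂²`-graded algebra `𝒜_A` of superfields on
`ℤ₂²`-Minkowski spacetime `ℝ^{2|1,1,1}`. -/
abbrev SF (A : Type*) : Type _ := ℕ → Bool → Bool → (E2 → A)

/-- `Bool → ZMod 2`. -/
def bz (a : Bool) : ZMod 2 := if a then 1 else 0

/-- The `ℤ₂²`-degree of the monomial `z^k θ₋^a θ₊^b`, where `deg z = (1,1)`,
`deg θ₋ = (0,1)` and `deg θ₊ = (1,0)`. -/
def mdeg (k : ℕ) (a b : Bool) : G2 := ((k : ZMod 2) + bz b, (k : ZMod 2) + bz a)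

/-- The light-cone partial derivative `∂₋`. -/
def pdm {W : Type*} [NormedAddCommGroup W] [NormedSpace ℝ W] (f : E2 → W) : E2 → W :=
  fun p => fderiv ℝ f p (1, 0)

/-- The light-cone partial derivative `∂₊`. -/
def pdp {W : Type*} [NormedAddCommGroup W] [NormedSpace ℝ W] (f : E2 → W) : E2 → W :=
  fun p => fderiv ℝ f p (0, 1)

namespace SF

variable {A : Type*} [NormedRing A] [NormedAlgebra ℝ A]

/-- `∂₋` acting coefficientwise on superfields. -/
def Pm (c : SF A) : SF A := fun k a b => pdm (c k a b)

/-- `∂₊` acting coefficientwise on superfields. -/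
def Pp (c : SF A) : SF A := fun k a b => pdp (c k a b)

/-- `∂_z`, acting on normal-form monomials by `∂_z(z^k θ₋^a θ₊^b f) = k z^{k-1} θ₋^a θ₊^b f`. -/
def Pz (c : SF A) : SF A := fun k a b => ((k + 1 : ℕ) : ℝ) • c (k + 1) a b

/-- `∂_{θ₋}`, acting by `∂_{θ₋}(z^k θ₋^a θ₊^b f) = (-1)^k a z^k θ₊^b f`. -/
def Dthm (c : SF A) : SF A := fun k a b => if a then 0 else ((-1 : ℝ) ^ k) • c k true b

/-- `∂_{θ₊}`, acting by `∂_{θ₊}(z^k θ₋^a θ₊^b f) = (-1)^k b z^k θ₋^a f`. -/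
def Dthp (c : SF A) : SF A := fun k a b => if b then 0 else ((-1 : ℝ) ^ k) • c k a true

/-- Left multiplication by `θ₋` (recall `z θ₋ = -θ₋ z`). -/
def Mthm (c : SF A) : SF A := fun k a b => if a then ((-1 : ℝ) ^ k) • c k false b else 0

/-- Left multiplication by `θ₊` (recall `z θ₊ = -θ₊ z`). -/
def Mthp (c : SF A) : SF A := fun k a b => if b then ((-1 : ℝ) ^ k) • c k a false else 0

/-- The supercharge `Q₋ = ∂_{θ₋} + ½ θ₋ ∂₋ − ½ θ₊ ∂_z`. -/
def Qm (c : SF A) : SF A := Dthm c + (1/2 : ℝ) • Mthm (Pm c) - (1/2 : ℝ) • Mthp (Pz c)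

/-- The supercharge `Q₊ = ∂_{θ₊} + ½ θ₊ ∂₊ + ½ θ₋ ∂_z`. -/
def Qp (c : SF A) : SF A := Dthp c + (1/2 : ℝ) • Mthp (Pp c) + (1/2 : ℝ) • Mthm (Pz c)

/-- The SUSY covariant derivative `D₋ = ∂_{θ₋} − ½ θ₋ ∂₋ + ½ θ₊ ∂_z`. -/
def Dm (c : SF A) : SF A := Dthm c - (1/2 : ℝ) • Mthm (Pm c) + (1/2 : ℝ) • Mthp (Pz c)

/-- The SUSY covariant derivative `D₊ = ∂_{θ₊} − ½ θ₊ ∂₊ − ½ θ₋ ∂_z`. -/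
def Dp (c : SF A) : SF A := Dthp c - (1/2 : ℝ) • Mthp (Pp c) - (1/2 : ℝ) • Mthm (Pz c)

end SF

section Helpers
variable {W : Type*} [NormedAddCommGroup W] [NormedSpace ℝ W]

lemma pdm_zero : pdm (0 : E2 → W) = 0 := by
  funext p
  have : fderiv ℝ (0 : E2 → W) p = 0 := fderiv_const_apply 0
  simp [pdm, this]

lemma pdm_smul (r : ℝ) (f : E2 → W) (hf : Differentiable ℝ f) :
    pdm (r • f) = r • pdm f := by
  funext p
  have : fderiv ℝ (r • f) p = r • fderiv ℝ f p := fderiv_const_smul (hf p) r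
  simp [pdm, this]

lemma pdm_add (f g : E2 → W) (hf : Differentiable ℝ f) (hg : Differentiable ℝ g) :
    pdm (f + g) = pdm f + pdm g := by
  funext p
  have : fderiv ℝ (f + g) p = fderiv ℝ f p + fderiv ℝ g p := fderiv_add (hf p) (hg p)
  simp [pdm, this]

lemma pdm_sub (f g : E2 → W) (hf : Differentiable ℝ f) (hg : Differentiable ℝ g) :
    pdm (f - g) = pdm f - pdm g := by
  funext p
  have : fderiv ℝ (f - g) p = fderiv ℝ f p - fderiv ℝ g p := fderiv_sub (hf p) (hg p)
  simp [pdm, this]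

lemma pdm_neg (f : E2 → W) : pdm (-f) = -pdm f := by
  funext p
  simp [pdm, fderiv_neg]

lemma pdp_zero : pdp (0 : E2 → W) = 0 := by
  funext p
  have : fderiv ℝ (0 : E2 → W) p = 0 := fderiv_const_apply 0
  simp [pdp, this]

lemma pdp_smul (r : ℝ) (f : E2 → W) (hf : Differentiable ℝ f) :
    pdp (r • f) = r • pdp f := by
  funext p
  have : fderiv ℝ (r • f) p = r • fderiv ℝ f p := fderiv_const_smul (hf p) r
  simp [pdp, this]

lemma pdp_add (f g : E2 → W) (hf : Differentiable ℝ f) (hg : Differentiable ℝ g) :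
    pdp (f + g) = pdp f + pdp g := by
  funext p
  have : fderiv ℝ (f + g) p = fderiv ℝ f p + fderiv ℝ g p := fderiv_add (hf p) (hg p)
  simp [pdp, this]

lemma pdp_sub (f g : E2 → W) (hf : Differentiable ℝ f) (hg : Differentiable ℝ g) :
    pdp (f - g) = pdp f - pdp g := by
  funext p
  have : fderiv ℝ (f - g) p = fderiv ℝ f p - fderiv ℝ g p := fderiv_sub (hf p) (hg p)
  simp [pdp, this]

lemma pdp_neg (f : E2 → W) : pdp (-f) = -pdp f := by
  funext p
  simp [pdp, fderiv_neg]

lemma topsucc : (⊤ : ℕ∞) + 1 ≤ ((⊤ : ℕ∞) : WithTop ℕ∞) := by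
  exact_mod_cast (by simp : ((⊤ : ℕ∞) + 1 : ℕ∞) ≤ ⊤)

lemma pdm_contDiff (f : E2 → W) (hf : ContDiff ℝ (⊤ : ℕ∞) f) : ContDiff ℝ (⊤ : ℕ∞) (pdm f) :=
  (ContinuousLinearMap.apply ℝ W ((1,0) : E2)).contDiff.comp (hf.fderiv_right topsucc)

lemma pdp_contDiff (f : E2 → W) (hf : ContDiff ℝ (⊤ : ℕ∞) f) : ContDiff ℝ (⊤ : ℕ∞) (pdp f) :=
  (ContinuousLinearMap.apply ℝ W ((0,1) : E2)).contDiff.comp (hf.fderiv_right topsucc)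

lemma pdm_pdp (f : E2 → W) (hf : ContDiff ℝ (⊤ : ℕ∞) f) : pdm (pdp f) = pdp (pdm f) := by
  funext p
  have hdf : Differentiable ℝ (fderiv ℝ f) :=
    (hf.fderiv_right topsucc).differentiable (by simp)
  have h : ∀ v w : E2, fderiv ℝ (fun q => fderiv ℝ f q v) p w = fderiv ℝ (fderiv ℝ f) p w v := by
    intro v w
    rw [fderiv_clm_apply (hdf p) (differentiableAt_const v)]
    simp
  have hs2 : IsSymmSndFDerivAt ℝ f p := by
    apply ContDiffAt.isSymmSndFDerivAt (hf.contDiffAt)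
    simp only [minSmoothness_of_isRCLikeNormedField]
    norm_cast
  show fderiv ℝ (fun q => fderiv ℝ f q (0,1)) p (1,0)
      = fderiv ℝ (fun q => fderiv ℝ f q (1,0)) p (0,1)
  rw [h, h, hs2.eq]

end Helpers

lemma diff_smul' {A : Type*} [NormedRing A] [NormedAlgebra ℝ A] (r : ℝ) (f : E2 → A)
    (hf : Differentiable ℝ f) : Differentiable ℝ (r • f) := hf.const_smul r
lemma diff_sub' {A : Type*} [NormedRing A] [NormedAlgebra ℝ A] (f g : E2 → A)
    (hf : Differentiable ℝ f) (hg : Differentiable ℝ g) : Differentiable ℝ (f - g) := hf.sub hg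
lemma diff_add' {A : Type*} [NormedRing A] [NormedAlgebra ℝ A] (f g : E2 → A)
    (hf : Differentiable ℝ f) (hg : Differentiable ℝ g) : Differentiable ℝ (f + g) := hf.add hg
lemma diff_neg' {A : Type*} [NormedRing A] [NormedAlgebra ℝ A] (f : E2 → A)
    (hf : Differentiable ℝ f) : Differentiable ℝ (-f) := hf.neg



open SF in
/-- The vector fields `Q₋`, `Q₊`, `P₋ = ∂₋`, `P₊ = ∂₊`, `Z = ∂_z` on `ℤ₂²`-Minkowski
spacetime form a representation of the `ℤ₂ × ℤ₂`-graded `d = 2`, `𝒩 = (1,1)`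
supertranslation algebra: `[Q₋,Q₋] = P₋`, `[Q₊,Q₊] = P₊`, `[Q₋,Q₊] = Z`, and all other
graded brackets vanish. -/
theorem z22_supercharges_represent_supertranslation_algebra
    (c : SF ℝ) (hc : ∀ k a b, ContDiff ℝ (⊤ : ℕ∞) (c k a b)) :
    Qm (Qm c) = (1/2 : ℝ) • Pm c ∧
    Qp (Qp c) = (1/2 : ℝ) • Pp c ∧
    Qm (Qp c) - Qp (Qm c) = Pz c ∧
    Qm (Pm c) = Pm (Qm c) ∧
    Qm (Pp c) = Pp (Qm c) ∧
    Qp (Pm c) = Pm (Qp c) ∧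
    Qp (Pp c) = Pp (Qp c) ∧
    Qm (Pz c) + Pz (Qm c) = 0 ∧
    Qp (Pz c) + Pz (Qp c) = 0 := by
  have hd : ∀ k a b, Differentiable ℝ (c k a b) :=
    fun k a b => (hc k a b).differentiable (by simp)
  have hdm : ∀ k a b, Differentiable ℝ (pdm (c k a b)) :=
    fun k a b => (pdm_contDiff _ (hc k a b)).differentiable
      (by simp)
  have hdp : ∀ k a b, Differentiable ℝ (pdp (c k a b)) :=
    fun k a b => (pdp_contDiff _ (hc k a b)).differentiable
      (by simp)
  have hsym : ∀ k a b, pdm (pdp (c k a b)) = pdp (pdm (c k a b)) :=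
    fun k a b => pdm_pdp _ (hc k a b)
  have key : ∀ k : ℕ,
      ((-1:ℝ)^k = 1 ∧ (-1:ℝ)^(k+1) = -1) ∨ ((-1:ℝ)^k = -1 ∧ (-1:ℝ)^(k+1) = 1) := by
    intro k
    rcases Nat.even_or_odd k with hk | hk
    · exact Or.inl ⟨hk.neg_one_pow, by rw [pow_succ, hk.neg_one_pow]; ring⟩
    · exact Or.inr ⟨hk.neg_one_pow, by rw [pow_succ, hk.neg_one_pow]; ring⟩
  refine ⟨?_, ?_, ?_, ?_, ?_, ?_, ?_, ?_, ?_⟩ <;>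
  · funext k a b
    cases a <;> cases b <;>
      simp only [Qm, Qp, Pm, Pp, Pz, Dthm, Dthp, Mthm, Mthp, Pi.add_apply, Pi.sub_apply,
        Pi.smul_apply, Pi.zero_apply, Bool.false_eq_true, ite_true, ite_false, if_true, if_false,
        smul_zero, add_zero, zero_add, sub_zero, zero_sub, neg_neg, smul_neg]
    all_goals (
      rcases key k with ⟨h1, h2⟩ | ⟨h1, h2⟩ <;>
        (try simp only [h1, h2, one_smul, neg_smul, smul_neg, neg_neg, neg_sub,
          sub_neg_eq_add]) <;>
        (try simp (disch :=
            (repeat' (first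
              | apply diff_sub' | apply diff_add' | apply diff_smul' | apply diff_neg')) <;>
            (first | exact hd _ _ _ | exact hdm _ _ _ | exact hdp _ _ _))
          only [pdm_smul, pdm_add, pdm_sub, pdm_neg, pdm_zero,
          pdp_smul, pdp_add, pdp_sub, pdp_neg, pdp_zero, hsym]) <;>
        (first
          | rfl
          | (funext p
             simp only [Pi.add_apply, Pi.sub_apply, Pi.smul_apply, Pi.neg_apply, Pi.zero_apply,
               smul_eq_mul]
             push_cast
             ring)))
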